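/- arXiv:2604.13365 — 2 statements merged into one kernel-verified Lean document; each statement's English description precedes it below -/
import Mathlib

section
/- Let D be a positive squarefree integer. Then the set of matrices {(1 0; D₁ 1)·(1 μ; 0 1) : D = D₁D₂ a factorization into positive integers, 0 ≤ μ < D₂} is a complete set of representatives for the right cosets Γ₀(D)\SL₂(ℤ). -/
open Matrix MatrixGroups CongruenceSubgroup

/-- The lower-triangular unipotent matrix `(1 0; c 1)` in `SL(2, ℤ)`. -/
def lowerUnit (c : ℤ) : SL(2, ℤ) :=
  ⟨!![1, 0; c, 1], by simp [Matrix.det_fin_two_of]⟩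

/-- The upper-triangular unipotent matrix `(1 b; 0 1)` in `SL(2, ℤ)`. -/
def upperUnit (b : ℤ) : SL(2, ℤ) :=
  ⟨!![1, b; 0, 1], by simp [Matrix.det_fin_two_of]⟩

set_option linter.unnecessarySeqFocus false in
lemma lu_inv (a m : ℤ) :
    (lowerUnit a * upperUnit m)⁻¹ =
      ⟨!![1 + m * a, -m; -a, 1], by simp [Matrix.det_fin_two_of]⟩ := by
  apply inv_eq_of_mul_eq_one_right
  ext i j
  change ((lowerUnit a : Matrix (Fin 2) (Fin 2) ℤ) * upperUnit m * !![1 + m * a, -m; -a, 1]) i j = (1 : Matrix (Fin 2) (Fin 2) ℤ) i j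
  fin_cases i <;> fin_cases j <;>
    simp [lowerUnit, upperUnit, Matrix.mul_apply, Fin.sum_univ_succ] <;> ring_nf

lemma mem_iff (D : ℕ) (γ : SL(2, ℤ)) (a m : ℤ) :
    γ * (lowerUnit a * upperUnit m)⁻¹ ∈ Gamma0 D ↔
      (D : ℤ) ∣ γ 1 0 + a * (γ 1 0 * m - γ 1 1) := by
  have h : ((γ * (lowerUnit a * upperUnit m)⁻¹ : SL(2, ℤ)) : Matrix (Fin 2) (Fin 2) ℤ) 1 0
      = γ 1 0 + a * (γ 1 0 * m - γ 1 1) := by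
    rw [lu_inv]
    change ((γ : Matrix (Fin 2) (Fin 2) ℤ) * !![1 + m * a, -m; -a, 1]) 1 0 = _
    simp [Matrix.mul_apply, Fin.sum_univ_succ]
    ring
  rw [Gamma0_mem]
  rw [show ((γ * (lowerUnit a * upperUnit m)⁻¹ : SL(2, ℤ)) 1 0 : ℤ) = _ from h]
  exact ZMod.intCast_zmod_eq_zero_iff_dvd _ _

lemma key_arith (D : ℕ) (hD : 0 < D) (hsq : Squarefree D) (c d : ℤ)
    (hcd : IsCoprime c d) :
    ∃! x : ℕ × ℕ × ℕ, (x.1 * x.2.1 = D ∧ x.2.2 < x.2.1) ∧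
      (D : ℤ) ∣ c + (x.1 : ℤ) * (c * (x.2.2 : ℤ) - d) := by
  set g : ℕ := Nat.gcd c.natAbs D with hgdef
  have hgD : g ∣ D := Nat.gcd_dvd_right _ _
  have hgpos : 0 < g := Nat.gcd_pos_of_pos_right _ hD
  set D₂ : ℕ := D / g with hD2def
  have hD2 : g * D₂ = D := Nat.mul_div_cancel' hgD
  have hD2pos : 0 < D₂ := Nat.div_pos (Nat.le_of_dvd hD hgD) hgpos
  have hcop : Nat.Coprime g D₂ := Nat.coprime_of_squarefree_mul (hD2 ▸ hsq)
  have hgc : (g : ℤ) ∣ c := Int.dvd_natAbs.mp (Int.natCast_dvd_natCast.mpr (Nat.gcd_dvd_left _ _))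
  obtain ⟨c', hc'⟩ := hgc
  -- coprimality of c and D₂
  have hcD2 : Nat.Coprime c.natAbs D₂ := by
    have h1 : Nat.gcd c.natAbs D₂ ∣ g :=
      Nat.dvd_gcd (Nat.gcd_dvd_left _ _) ((Nat.gcd_dvd_right _ _).trans ⟨g, by rw [← hD2]; ring⟩)
    have h2 : Nat.gcd c.natAbs D₂ ∣ Nat.gcd g D₂ := Nat.dvd_gcd h1 (Nat.gcd_dvd_right _ _)
    rw [hcop] at h2
    exact Nat.eq_one_of_dvd_one h2
  have hicop : IsCoprime c (D₂ : ℤ) := by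
    rw [Int.isCoprime_iff_gcd_eq_one]
    simpa [Int.gcd] using hcD2
  obtain ⟨u, v, huv⟩ := id hicop
  set μ0 : ℤ := u * (d - c') with hμ0def
  have hμ0 : (D₂ : ℤ) ∣ c * μ0 - (d - c') := ⟨-v * (d - c'), by linear_combination (d - c') * huv⟩
  set μ : ℕ := (μ0 % (D₂ : ℤ)).toNat with hμdef
  have hD2z : (0:ℤ) < (D₂ : ℤ) := by exact_mod_cast hD2pos
  have h1 : (μ : ℤ) = μ0 % (D₂ : ℤ) := Int.toNat_of_nonneg (Int.emod_nonneg _ hD2z.ne')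
  have hμlt : μ < D₂ := by
    have h2 : μ0 % (D₂ : ℤ) < D₂ := Int.emod_lt_of_pos _ hD2z
    rw [← h1] at h2
    exact_mod_cast h2
  have hsubdvd : (D₂ : ℤ) ∣ (μ : ℤ) - μ0 := ⟨-(μ0 / D₂), by rw [h1, Int.emod_def]; ring⟩
  have hdvd2 : (D₂ : ℤ) ∣ c * μ - (d - c') := by
    have h3 := dvd_add (hsubdvd.mul_left c) hμ0
    have h4 : c * ((μ : ℤ) - μ0) + (c * μ0 - (d - c')) = c * μ - (d - c') := by ring
    rwa [h4] at h3
  have hDz : (D : ℤ) = (g : ℤ) * (D₂ : ℤ) := by exact_mod_cast hD2.symm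
  refine ⟨⟨g, D₂, μ⟩, ⟨⟨hD2, hμlt⟩, ?_⟩, ?_⟩
  · have heq : c + (g : ℤ) * (c * μ - d) = (g : ℤ) * (c * (μ : ℤ) - (d - c')) := by
      rw [hc']; ring
    rw [heq, hDz]
    exact mul_dvd_mul_left _ hdvd2
  · rintro ⟨a, b, m⟩ ⟨⟨habD, hmb⟩, hdvd⟩
    simp only at habD hmb hdvd ⊢
    have hapos : 0 < a := by
      rcases Nat.eq_zero_or_pos a with h | h
      · subst h; simp at habD; omega
      · exact h
    have hbpos : 0 < b := by
      rcases Nat.eq_zero_or_pos b with h | h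
      · subst h; simp at habD; omega
      · exact h
    have haD : a ∣ D := ⟨b, habD.symm⟩
    have hac : (a : ℤ) ∣ c := by
      have h1 : (a : ℤ) ∣ c + a * (c * m - d) :=
        (Int.natCast_dvd_natCast.mpr haD).trans hdvd
      have h2 := dvd_sub h1 (dvd_mul_right (a : ℤ) (c * m - d))
      simpa using h2
    have hag : a ∣ g := by
      refine Nat.dvd_gcd ?_ haD
      exact Int.natCast_dvd_natCast.mp (Int.dvd_natAbs.mpr hac)
    have hcopab : Nat.Coprime a b := Nat.coprime_of_squarefree_mul (habD ▸ hsq)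
    -- show g ∣ a
    obtain ⟨t, ht⟩ := hag
    have htb : t ∣ b := by
      have h5 : a * t ∣ a * b := by rw [← ht, habD]; exact hgD
      exact (mul_dvd_mul_iff_left hapos.ne').mp h5
    have ht1 : t = 1 := by
      by_contra hne
      obtain ⟨p, hp, hpt⟩ := Nat.exists_prime_and_dvd hne
      have hpb : p ∣ b := hpt.trans htb
      have hpc : (p : ℤ) ∣ c := by
        have : p ∣ c.natAbs := (hpt.trans ((Dvd.intro_left a ht.symm).trans (Nat.gcd_dvd_left _ _)))
        exact Int.dvd_natAbs.mp (Int.natCast_dvd_natCast.mpr this)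
      have hpD : (p : ℤ) ∣ (D : ℤ) := Int.natCast_dvd_natCast.mpr (hpb.trans ⟨a, by rw [← habD]; ring⟩)
      have hpad : (p : ℤ) ∣ (a : ℤ) * d := by
        have h6 : (p : ℤ) ∣ c + a * (c * m - d) := hpD.trans hdvd
        have h7 : (p : ℤ) ∣ c + (a : ℤ) * (c * m) := by
          refine dvd_add hpc ?_
          have h7a := hpc.mul_left ((a : ℤ) * (m : ℤ))
          have heq : (a : ℤ) * (m : ℤ) * c = (a : ℤ) * (c * m) := by ring
          rwa [heq] at h7a
        have h8 := dvd_sub h7 h6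
        have h9 : c + (a : ℤ) * (c * m) - (c + a * (c * m - d)) = a * d := by ring
        rwa [h9] at h8
      have hpprime : Prime (p : ℤ) := Nat.prime_iff_prime_int.mp hp
      rcases hpprime.dvd_mul.mp hpad with hpa | hpd
      · have hpa' : p ∣ a := Int.natCast_dvd_natCast.mp hpa
        have : p ∣ Nat.gcd a b := Nat.dvd_gcd hpa' hpb
        rw [hcopab] at this
        exact hp.ne_one (Nat.eq_one_of_dvd_one this)
      · exact hpprime.not_unit (hcd.isUnit_of_dvd' hpc hpd)
    have hga : g = a := by rw [ht, ht1, mul_one]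
    have hbD2 : b = D₂ := by
      have : g * b = g * D₂ := by rw [hD2, ← habD, hga]
      exact Nat.eq_of_mul_eq_mul_left hgpos this
    -- uniqueness of μ
    have hdvdm : (D₂ : ℤ) ∣ c * m - (d - c') := by
      have h10 : (g : ℤ) * (D₂ : ℤ) ∣ (g : ℤ) * (c * m - (d - c')) := by
        rw [← hDz]
        have heq : c + (a : ℤ) * (c * m - d) = (g : ℤ) * (c * (m : ℤ) - (d - c')) := by
          rw [← hga, hc']; ring
        rwa [heq] at hdvd
      exact (mul_dvd_mul_iff_left (show (g:ℤ) ≠ 0 by exact_mod_cast hgpos.ne')).mp h10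
    have hsub : (D₂ : ℤ) ∣ c * ((m : ℤ) - (μ : ℤ)) := by
      have := dvd_sub hdvdm hdvd2
      have heq : c * m - (d - c') - (c * μ - (d - c')) = c * ((m : ℤ) - μ) := by ring
      rwa [heq] at this
    have hmμ : (D₂ : ℤ) ∣ (m : ℤ) - (μ : ℤ) := hicop.symm.dvd_of_dvd_mul_left hsub
    have hm : m = μ := by
      have h11 : ((m : ℤ) - μ) = 0 := by
        refine Int.eq_zero_of_dvd_of_natAbs_lt_natAbs hmμ ?_
        have hmb' : m < D₂ := hbD2 ▸ hmb
        simp only [Int.natAbs_natCast]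
        omega
      omega
    simp only [Prod.mk.injEq]
    exact ⟨hga.symm, hbD2, hm⟩

/-- For a positive squarefree integer `D`, the matrices
`(1 0; D₁ 1)(1 μ; 0 1)` with `D = D₁D₂` and `0 ≤ μ < D₂` form a complete set of
representatives of the right cosets `Γ₀(D) \ SL₂(ℤ)`: every `γ ∈ SL₂(ℤ)` lies in
exactly one coset `Γ₀(D) · (1 0; D₁ 1)(1 μ; 0 1)`. -/
theorem gamma0_coset_reps (D : ℕ) (hD : 0 < D) (hsq : Squarefree D) (γ : SL(2, ℤ)) :
    ∃! x : ℕ × ℕ × ℕ,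
      (x.1 * x.2.1 = D ∧ x.2.2 < x.2.1) ∧
        γ * (lowerUnit (x.1 : ℤ) * upperUnit (x.2.2 : ℤ))⁻¹ ∈ Gamma0 D := by
  have hdet := γ.property
  rw [Matrix.det_fin_two] at hdet
  have hcd : IsCoprime (γ 1 0 : ℤ) (γ 1 1) := ⟨-(γ 0 1), γ 0 0, by linarith⟩
  have h := key_arith D hD hsq (γ 1 0) (γ 1 1) hcd
  exact (existsUnique_congr (fun x => by rw [mem_iff])).mpr h
end

section
/- Let D = 7, χ₇ the Legendre symbol mod 7, and define a₇,₃,₇,₁(n, χ₇) = −∑_{m=0}^{7n} (3n − 10m/7)·σ_{2,1,χ₇}(m)·σ_{6,1,χ₇}(7n − m) + ∑_{m=0}^{n} (3n − 10m)·σ_{2,χ₇}(m)·σ_{6,χ₇}(n − m), where σ_{l−1,φ,ψ}(0) = −L(1−l,φ)L(0,ψ) (taken as 0 unless ψ is trivial, in which case it is L(1−l,φ)/2). Then a₇,₃,₇,₁(1, χ₇) = 66816/7 and a₇,₃,₇,₁(2, χ₇) = −1603584/7; in particular a₇,₃,₇,₁(2, χ₇) = −24·a₇,₃,₇,₁(1,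 χ₇). -/
open Finset Complex

instance : Fact (Nat.Prime 7) := ⟨by norm_num⟩

/-- The Legendre symbol mod `7` viewed as a complex-valued Dirichlet character. -/
noncomputable def chi7 : DirichletCharacter ℂ 7 :=
  (quadraticChar (ZMod 7)).ringHomComp (Int.castRingHom ℂ)

/-- `σ_{l-1,1,χ₇}(n) = ∑_{d ∣ n} χ₇(n/d) d^{l-1}` for `n ≥ 1`, with value `0` at `n = 0`. -/
noncomputable def sigmaOneChi7 (l n : ℕ) : ℂ :=
  ∑ d ∈ n.divisors, chi7 ((n / d : ℕ)) * (d : ℂ) ^ (l - 1)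

/-- `σ_{l-1,χ₇,1}(n) = ∑_{d ∣ n} χ₇(d) d^{l-1}` for `n ≥ 1`, with constant term
`σ_{l-1,χ₇,1}(0) = L(1-l, χ₇)/2`. -/
noncomputable def sigmaChi7One (l n : ℕ) : ℂ :=
  if n = 0 then DirichletCharacter.LFunction chi7 (1 - l) / 2
  else ∑ d ∈ n.divisors, chi7 (d : ℕ) * (d : ℂ) ^ (l - 1)

/-- The coefficient `a_{7,3,7,1}(n, χ₇)`. -/
noncomputable def a7371 (n : ℕ) : ℂ :=
  -∑ m ∈ Finset.range (7 * n + 1),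
      (3 * (n : ℂ) - 10 * (m : ℂ) / 7) * sigmaOneChi7 3 m * sigmaOneChi7 7 (7 * n - m) +
    ∑ m ∈ Finset.range (n + 1),
      (3 * (n : ℂ) - 10 * (m : ℂ)) * sigmaChi7One 3 m * sigmaChi7One 7 (n - m)

/-! ### Auxiliary lemmas -/

lemma chi7_nat (n : ℕ) : chi7 (n : ZMod 7) =
    if n % 7 = 0 then 0 else if n % 7 = 1 ∨ n % 7 = 2 ∨ n % 7 = 4 then 1 else -1 := by
  have : chi7 (n : ZMod 7) = ((quadraticChar (ZMod 7) ((n % 7 : ℕ) : ZMod 7) : ℤ) : ℂ) := by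
    rw [show ((n : ℕ) : ZMod 7) = ((n % 7 : ℕ) : ZMod 7) from (ZMod.natCast_mod n 7).symm]; rfl
  rw [this]
  have h7 : n % 7 < 7 := Nat.mod_lt _ (by norm_num)
  interval_cases h : n % 7 <;> norm_num <;> norm_cast

lemma chi7_zval (a : ZMod 7) (v : ℤ) (h : quadraticChar (ZMod 7) a = v) : chi7 a = (v : ℂ) := by
  rw [show chi7 a = ((quadraticChar (ZMod 7) a : ℤ) : ℂ) from rfl, h]

lemma bern2 : bernoulli 2 = 1/6 := by
  rw [bernoulli_eq_bernoulli'_of_ne_one (by norm_num), bernoulli'_two]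

lemma bern3 : bernoulli 3 = 0 := by
  rw [bernoulli_eq_bernoulli'_of_ne_one (by norm_num), bernoulli'_three]

lemma bern4 : bernoulli 4 = -1/30 := by
  rw [bernoulli_eq_bernoulli'_of_ne_one (by norm_num), bernoulli'_four]

lemma bern5' : bernoulli' 5 = 0 := bernoulli'_eq_zero_of_odd (by decide) (by norm_num)

lemma bern5 : bernoulli 5 = 0 := by
  rw [bernoulli_eq_bernoulli'_of_ne_one (by norm_num), bern5']

lemma bern6' : bernoulli' 6 = 1/42 := by
  rw [bernoulli'_def]
  rw [show Finset.range 6 = Finset.range 6 from rfl]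
  norm_num [Finset.sum_range_succ, bernoulli'_zero, bernoulli'_one, bernoulli'_two,
    bernoulli'_three, bernoulli'_four, bern5', Nat.choose]

lemma bern6 : bernoulli 6 = 1/42 := by
  rw [bernoulli_eq_bernoulli'_of_ne_one (by norm_num), bern6']

lemma bern7 : bernoulli 7 = 0 := by
  rw [bernoulli_eq_bernoulli'_of_ne_one (by norm_num),
    bernoulli'_eq_zero_of_odd (by decide) (by norm_num)]

lemma bern_eval (n : ℕ) (z : ℂ) : ((Polynomial.bernoulli n).map (algebraMap ℚ ℂ)).eval z
    = ∑ i ∈ range (n+1), ((bernoulli i : ℚ) : ℂ) * (n.choose i : ℂ) * z ^ (n - i) := by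
  simp [Polynomial.bernoulli, Polynomial.eval_finset_sum, Polynomial.eval_monomial]

open HurwitzZeta ZMod in
lemma hz_val (k : ℕ) (hk : k ≠ 0) (j : ZMod 7) :
    hurwitzZeta (toAddCircle j) (-(k : ℂ)) =
      -1/(k+1) * ∑ i ∈ range (k+1+1),
        ((bernoulli i : ℚ) : ℂ) * ((k+1).choose i : ℂ) * ((j.val : ℂ)/7) ^ (k+1-i) := by
  have hx : ((j.val : ℝ) / 7) ∈ Set.Icc (0:ℝ) 1 := by
    constructor
    · positivity
    · rw [div_le_one (by norm_num)]
      exact_mod_cast (ZMod.val_lt j).le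
  have hc : ((((j.val : ℝ) / 7 : ℝ)) : ℂ) = (j.val : ℂ)/7 := by push_cast; ring
  rw [toAddCircle_apply]
  simp only [Nat.cast_ofNat]
  rw [hurwitzZeta_neg_nat hk hx, bern_eval, hc]

open HurwitzZeta ZMod in
lemma LFunction_chi7_neg (k : ℕ) (hk : k ≠ 0) :
    DirichletCharacter.LFunction chi7 (-(k : ℂ)) =
      (7 : ℂ) ^ k * ∑ j : ZMod 7, chi7 j *
        (-1/(k+1) * ∑ i ∈ range (k+1+1),
          ((bernoulli i : ℚ) : ℂ) * ((k+1).choose i : ℂ) * ((j.val : ℂ)/7) ^ (k+1-i)) := by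
  rw [DirichletCharacter.LFunction, ZMod.LFunction]
  rw [show (((7:ℕ) : ℂ)) ^ (-(-(k:ℂ))) = (7:ℂ) ^ (k:ℕ) by
    rw [neg_neg]; push_cast; exact cpow_natCast _ _]
  congr 1
  exact Finset.sum_congr rfl fun j _ => by rw [hz_val k hk j]

lemma zmod7_sum (f : ZMod 7 → ℂ) : ∑ j : ZMod 7, f j = f 0 + f 1 + f 2 + f 3 + f 4 + f 5 + f 6 :=
  Fin.sum_univ_seven f

lemma chi7_L2 : DirichletCharacter.LFunction chi7 (-2) = -16/7 := by
  have := LFunction_chi7_neg 2 (by norm_num)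
  rw [show (-((2:ℕ):ℂ)) = -2 by norm_num] at this
  rw [this, zmod7_sum]
  rw [chi7_zval 0 0 (by decide), chi7_zval 1 1 (by decide), chi7_zval 2 1 (by decide),
    chi7_zval 3 (-1) (by decide), chi7_zval 4 1 (by decide), chi7_zval 5 (-1) (by decide),
    chi7_zval 6 (-1) (by decide)]
  norm_num [Finset.sum_range_succ, bernoulli_zero, bernoulli_one, bern2, bern3,
    show ((0:ZMod 7)).val = 0 from rfl, show ((1:ZMod 7)).val = 1 from rfl,
    show ((2:ZMod 7)).val = 2 from rfl, show ((3:ZMod 7)).val = 3 from rfl,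
    show ((4:ZMod 7)).val = 4 from rfl, show ((5:ZMod 7)).val = 5 from rfl,
    show ((6:ZMod 7)).val = 6 from rfl]
  try ring

lemma chi7_L6 : DirichletCharacter.LFunction chi7 (-6) = -1168 := by
  have := LFunction_chi7_neg 6 (by norm_num)
  rw [show (-((6:ℕ):ℂ)) = -6 by norm_num] at this
  rw [this, zmod7_sum]
  rw [chi7_zval 0 0 (by decide), chi7_zval 1 1 (by decide), chi7_zval 2 1 (by decide),
    chi7_zval 3 (-1) (by decide), chi7_zval 4 1 (by decide), chi7_zval 5 (-1) (by decide),
    chi7_zval 6 (-1) (by decide)]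
  norm_num [Finset.sum_range_succ, bernoulli_zero, bernoulli_one, bern2, bern3, bern4,
    bern5, bern6, bern7,
    show ((0:ZMod 7)).val = 0 from rfl, show ((1:ZMod 7)).val = 1 from rfl,
    show ((2:ZMod 7)).val = 2 from rfl, show ((3:ZMod 7)).val = 3 from rfl,
    show ((4:ZMod 7)).val = 4 from rfl, show ((5:ZMod 7)).val = 5 from rfl,
    show ((6:ZMod 7)).val = 6 from rfl,
    show Nat.choose 7 2 = 21 from rfl, show Nat.choose 7 4 = 35 from rfl,
    show Nat.choose 7 6 = 7 from rfl]
  try ring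

lemma sCO_3_0 : sigmaChi7One 3 0 = -8/7 := by
  rw [sigmaChi7One, if_pos rfl, show (1 - ((3:ℕ):ℂ)) = -2 by norm_num, chi7_L2]
  norm_num

lemma sCO_7_0 : sigmaChi7One 7 0 = -584 := by
  rw [sigmaChi7One, if_pos rfl, show (1 - ((7:ℕ):ℂ)) = -6 by norm_num, chi7_L6]
  norm_num

lemma sOC_3_0 : sigmaOneChi7 3 0 = 0 := by rw [sigmaOneChi7]; simp

lemma sOC_3_1 : sigmaOneChi7 3 1 = 1 := by
  rw [sigmaOneChi7, show (1:ℕ).divisors = {1} from by decide]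
  norm_num [Finset.sum_insert, Finset.mem_insert, chi7_nat]

lemma sOC_3_2 : sigmaOneChi7 3 2 = 5 := by
  rw [sigmaOneChi7, show (2:ℕ).divisors = {1,2} from by decide]
  norm_num [Finset.sum_insert, Finset.mem_insert, chi7_nat]

lemma sOC_3_3 : sigmaOneChi7 3 3 = 8 := by
  rw [sigmaOneChi7, show (3:ℕ).divisors = {1,3} from by decide]
  norm_num [Finset.sum_insert, Finset.mem_insert, chi7_nat]

lemma sOC_3_4 : sigmaOneChi7 3 4 = 21 := by
  rw [sigmaOneChi7, show (4:ℕ).divisors = {1,2,4} from by decide]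
  norm_num [Finset.sum_insert, Finset.mem_insert, chi7_nat]

lemma sOC_3_5 : sigmaOneChi7 3 5 = 24 := by
  rw [sigmaOneChi7, show (5:ℕ).divisors = {1,5} from by decide]
  norm_num [Finset.sum_insert, Finset.mem_insert, chi7_nat]

lemma sOC_3_6 : sigmaOneChi7 3 6 = 40 := by
  rw [sigmaOneChi7, show (6:ℕ).divisors = {1,2,3,6} from by decide]
  norm_num [Finset.sum_insert, Finset.mem_insert, chi7_nat]

lemma sOC_3_7 : sigmaOneChi7 3 7 = 49 := by
  rw [sigmaOneChi7, show (7:ℕ).divisors = {1,7} from by decide]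
  norm_num [Finset.sum_insert, Finset.mem_insert, chi7_nat]

lemma sOC_3_8 : sigmaOneChi7 3 8 = 85 := by
  rw [sigmaOneChi7, show (8:ℕ).divisors = {1,2,4,8} from by decide]
  norm_num [Finset.sum_insert, Finset.mem_insert, chi7_nat]

lemma sOC_3_9 : sigmaOneChi7 3 9 = 73 := by
  rw [sigmaOneChi7, show (9:ℕ).divisors = {1,3,9} from by decide]
  norm_num [Finset.sum_insert, Finset.mem_insert, chi7_nat]

lemma sOC_3_10 : sigmaOneChi7 3 10 = 120 := by
  rw [sigmaOneChi7, show (10:ℕ).divisors = {1,2,5,10} from by decide]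
  norm_num [Finset.sum_insert, Finset.mem_insert, chi7_nat]

lemma sOC_3_11 : sigmaOneChi7 3 11 = 122 := by
  rw [sigmaOneChi7, show (11:ℕ).divisors = {1,11} from by decide]
  norm_num [Finset.sum_insert, Finset.mem_insert, chi7_nat]

lemma sOC_3_12 : sigmaOneChi7 3 12 = 168 := by
  rw [sigmaOneChi7, show (12:ℕ).divisors = {1,2,3,4,6,12} from by decide]
  norm_num [Finset.sum_insert, Finset.mem_insert, chi7_nat]

lemma sOC_3_13 : sigmaOneChi7 3 13 = 168 := by
  rw [sigmaOneChi7, show (13:ℕ).divisors = {1,13} from by decide]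
  norm_num [Finset.sum_insert, Finset.mem_insert, chi7_nat]

lemma sOC_3_14 : sigmaOneChi7 3 14 = 245 := by
  rw [sigmaOneChi7, show (14:ℕ).divisors = {1,2,7,14} from by decide]
  norm_num [Finset.sum_insert, Finset.mem_insert, chi7_nat]

lemma sOC_7_0 : sigmaOneChi7 7 0 = 0 := by rw [sigmaOneChi7]; simp

lemma sOC_7_1 : sigmaOneChi7 7 1 = 1 := by
  rw [sigmaOneChi7, show (1:ℕ).divisors = {1} from by decide]
  norm_num [Finset.sum_insert, Finset.mem_insert, chi7_nat]

lemma sOC_7_2 : sigmaOneChi7 7 2 = 65 := by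
  rw [sigmaOneChi7, show (2:ℕ).divisors = {1,2} from by decide]
  norm_num [Finset.sum_insert, Finset.mem_insert, chi7_nat]

lemma sOC_7_3 : sigmaOneChi7 7 3 = 728 := by
  rw [sigmaOneChi7, show (3:ℕ).divisors = {1,3} from by decide]
  norm_num [Finset.sum_insert, Finset.mem_insert, chi7_nat]

lemma sOC_7_4 : sigmaOneChi7 7 4 = 4161 := by
  rw [sigmaOneChi7, show (4:ℕ).divisors = {1,2,4} from by decide]
  norm_num [Finset.sum_insert, Finset.mem_insert, chi7_nat]

lemma sOC_7_5 : sigmaOneChi7 7 5 = 15624 := by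
  rw [sigmaOneChi7, show (5:ℕ).divisors = {1,5} from by decide]
  norm_num [Finset.sum_insert, Finset.mem_insert, chi7_nat]

lemma sOC_7_6 : sigmaOneChi7 7 6 = 47320 := by
  rw [sigmaOneChi7, show (6:ℕ).divisors = {1,2,3,6} from by decide]
  norm_num [Finset.sum_insert, Finset.mem_insert, chi7_nat]

lemma sOC_7_7 : sigmaOneChi7 7 7 = 117649 := by
  rw [sigmaOneChi7, show (7:ℕ).divisors = {1,7} from by decide]
  norm_num [Finset.sum_insert, Finset.mem_insert, chi7_nat]

lemma sOC_7_8 : sigmaOneChi7 7 8 = 266305 := by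
  rw [sigmaOneChi7, show (8:ℕ).divisors = {1,2,4,8} from by decide]
  norm_num [Finset.sum_insert, Finset.mem_insert, chi7_nat]

lemma sOC_7_9 : sigmaOneChi7 7 9 = 530713 := by
  rw [sigmaOneChi7, show (9:ℕ).divisors = {1,3,9} from by decide]
  norm_num [Finset.sum_insert, Finset.mem_insert, chi7_nat]

lemma sOC_7_10 : sigmaOneChi7 7 10 = 1015560 := by
  rw [sigmaOneChi7, show (10:ℕ).divisors = {1,2,5,10} from by decide]
  norm_num [Finset.sum_insert, Finset.mem_insert, chi7_nat]

lemma sOC_7_11 : sigmaOneChi7 7 11 = 1771562 := by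
  rw [sigmaOneChi7, show (11:ℕ).divisors = {1,11} from by decide]
  norm_num [Finset.sum_insert, Finset.mem_insert, chi7_nat]

lemma sOC_7_12 : sigmaOneChi7 7 12 = 3029208 := by
  rw [sigmaOneChi7, show (12:ℕ).divisors = {1,2,3,4,6,12} from by decide]
  norm_num [Finset.sum_insert, Finset.mem_insert, chi7_nat]

lemma sOC_7_13 : sigmaOneChi7 7 13 = 4826808 := by
  rw [sigmaOneChi7, show (13:ℕ).divisors = {1,13} from by decide]
  norm_num [Finset.sum_insert, Finset.mem_insert, chi7_nat]

lemma sOC_7_14 : sigmaOneChi7 7 14 = 7647185 := by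
  rw [sigmaOneChi7, show (14:ℕ).divisors = {1,2,7,14} from by decide]
  norm_num [Finset.sum_insert, Finset.mem_insert, chi7_nat]

lemma sCO_3_1 : sigmaChi7One 3 1 = 1 := by
  rw [sigmaChi7One, if_neg (by norm_num), show (1:ℕ).divisors = {1} from by decide]
  norm_num [Finset.sum_insert, Finset.mem_insert, chi7_nat]

lemma sCO_3_2 : sigmaChi7One 3 2 = 5 := by
  rw [sigmaChi7One, if_neg (by norm_num), show (2:ℕ).divisors = {1,2} from by decide]
  norm_num [Finset.sum_insert, Finset.mem_insert, chi7_nat]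

lemma sCO_7_1 : sigmaChi7One 7 1 = 1 := by
  rw [sigmaChi7One, if_neg (by norm_num), show (1:ℕ).divisors = {1} from by decide]
  norm_num [Finset.sum_insert, Finset.mem_insert, chi7_nat]

lemma sCO_7_2 : sigmaChi7One 7 2 = 65 := by
  rw [sigmaChi7One, if_neg (by norm_num), show (2:ℕ).divisors = {1,2} from by decide]
  norm_num [Finset.sum_insert, Finset.mem_insert, chi7_nat]


/-- Numerical values: `a_{7,3,7,1}(1, χ₇) = 66816/7`, `a_{7,3,7,1}(2, χ₇) = -1603584/7`;
in particular `a_{7,3,7,1}(2, χ₇) = -24 · a_{7,3,7,1}(1, χ₇)`. -/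
theorem a7371_values :
    a7371 1 = 66816 / 7 ∧ a7371 2 = -1603584 / 7 ∧ a7371 2 = -24 * a7371 1 := by
  have h1 : a7371 1 = 66816 / 7 := by
    rw [a7371]
    norm_num [Finset.sum_range_succ, sOC_3_0, sOC_3_1, sOC_3_2, sOC_3_3, sOC_3_4, sOC_3_5,
      sOC_3_6, sOC_3_7, sOC_7_0, sOC_7_1, sOC_7_2, sOC_7_3, sOC_7_4, sOC_7_5, sOC_7_6, sOC_7_7,
      sCO_3_0, sCO_3_1, sCO_7_0, sCO_7_1]
    try ring
  have h2 : a7371 2 = -1603584 / 7 := by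
    rw [a7371]
    norm_num [Finset.sum_range_succ, sOC_3_0, sOC_3_1, sOC_3_2, sOC_3_3, sOC_3_4, sOC_3_5,
      sOC_3_6, sOC_3_7, sOC_3_8, sOC_3_9, sOC_3_10, sOC_3_11, sOC_3_12, sOC_3_13, sOC_3_14,
      sOC_7_0, sOC_7_1, sOC_7_2, sOC_7_3, sOC_7_4, sOC_7_5, sOC_7_6, sOC_7_7, sOC_7_8,
      sOC_7_9, sOC_7_10, sOC_7_11, sOC_7_12, sOC_7_13, sOC_7_14,
      sCO_3_0, sCO_3_1, sCO_3_2, sCO_7_0, sCO_7_1, sCO_7_2]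
    try ring
  exact ⟨h1, h2, by rw [h1, h2]; ring⟩
end
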